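/- Let G=(V,E_L,E_R) be an achievement positional game and let u∈V with {u}∉E_L. If Left has a winning (resp. non-losing) strategy as first player on G, then Left has a winning (resp. non-losing) strategy as first player on the updated game G_u. -/

import Mathlib

namespace APG

/-- The two players: Left and Right. -/
inductive Player : Type
  | L : Player
  | R : Player
deriving DecidableEq, Repr

/-- The opponent of a player. -/
def Player.other : Player → Player
  | .L => .R
  | .R => .L

/-- An achievement positional game: a finite vertex set together with the set of
blue edges (Left's winning sets) and the set of red edges (Right's winning sets). -/
structure Game : Type where
  V : Finset ℕ
  EL : Finset (Finset ℕ)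
  ER : Finset (Finset ℕ)

/-- The edges are nonempty subsets of the vertex set. -/
def WellFormed (G : Game) : Prop :=
  (∀ e ∈ G.EL, e ⊆ G.V ∧ e.Nonempty) ∧ (∀ e ∈ G.ER, e ⊆ G.V ∧ e.Nonempty)

/-- The winning sets of a given player. -/
def Game.edges (G : Game) : Player → Finset (Finset ℕ)
  | .L => G.EL
  | .R => G.ER

/-- The player who makes the `i`-th move (0-indexed) when `s` moves first. -/
def mover (s : Player) (i : ℕ) : Player := if i % 2 = 0 then s else s.other

/-- The set of vertices picked by player `p` along the history `h`
(the chronological list of the moves played so far), when `s` moved first. -/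
def picked (s p : Player) (h : List ℕ) : Finset ℕ :=
  ((Finset.range h.length).filter fun i => mover s i = p).image fun i => h.getD i 0

/-- The set `S` of picked vertices fills some edge of `E`. -/
def fills (E : Finset (Finset ℕ)) (S : Finset ℕ) : Prop := ∃ e ∈ E, e ⊆ S

/-- The game is over: some player has picked all the vertices of one of their edges. -/
def ended (G : Game) (s : Player) (h : List ℕ) : Prop :=
  fills G.EL (picked s .L h) ∨ fills G.ER (picked s .R h)

/-- `h` is a legal history: no vertex is picked twice, every picked vertex belongs to
the board, and no move is made after the game has ended. -/
def ValidHist (G : Game) (s : Player) (h : List ℕ) : Prop :=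
  h.Nodup ∧ (∀ x ∈ h, x ∈ G.V) ∧ ∀ k, k < h.length → ¬ ended G s (h.take k)

/-- A strategy: a map assigning to each position (history) a vertex to pick. -/
abbrev Strategy := List ℕ → ℕ

/-- Along `h`, every move of player `p` agrees with the strategy `σ`. -/
def Follows (s p : Player) (σ : Strategy) (h : List ℕ) : Prop :=
  ∀ k, k < h.length → mover s k = p → h.getD k 0 = σ (h.take k)

/-- A finished play: either the game has ended or all vertices have been picked. -/
def Complete (G : Game) (s : Player) (h : List ℕ) : Prop :=
  ended G s h ∨ h.length = G.V.card

/-- The strategy `σ` of player `p` always suggests a legal move (an unpicked vertex)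
whenever the game is not over and it is `p`'s turn. -/
def Legal (G : Game) (s p : Player) (σ : Strategy) : Prop :=
  ∀ h, ValidHist G s h → Follows s p σ h → ¬ ended G s h → h.length < G.V.card →
    mover s h.length = p → σ h ∈ G.V ∧ σ h ∉ h

/-- Player `p` has a winning strategy on `G` when `s` moves first: following it,
every finished play ends with `p` having filled one of their edges (and, the game
having ended right there, the opponent has not filled an edge first). -/
def WinsAs (G : Game) (s p : Player) : Prop :=
  ∃ σ : Strategy, Legal G s p σ ∧
    ∀ h, ValidHist G s h → Follows s p σ h → Complete G s h →
      fills (G.edges p) (picked s p h)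

/-- Player `p` has a non-losing strategy on `G` when `s` moves first: following it,
the opponent never fills one of their edges. -/
def NonLosingAs (G : Game) (s p : Player) : Prop :=
  ∃ σ : Strategy, Legal G s p σ ∧
    ∀ h, ValidHist G s h → Follows s p σ h → Complete G s h →
      ¬ fills (G.edges p.other) (picked s p.other h)

/-- The possible results of the game, for a fixed starting player. -/
inductive Result : Type
  | Lwin : Result
  | draw : Result
  | Rwin : Result
deriving DecidableEq, Repr

/-- The result of `G` with optimal play, when `s` moves first, is `r`:
a win for a player means that player has a winning strategy, a draw means
both players have non-losing strategies. -/
def resultIs (G : Game) (s : Player) : Result → Prop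
  | .Lwin => WinsAs G s .L
  | .Rwin => WinsAs G s .R
  | .draw => NonLosingAs G s .L ∧ NonLosingAs G s .R

/-- An outcome: the pair of results with optimal play
(when Left starts, when Right starts). -/
abbrev Outcome := Result × Result

/-- `G` has outcome `o`. -/
def hasOutcome (G : Game) (o : Outcome) : Prop :=
  resultIs G .L o.1 ∧ resultIs G .R o.2

/-- Numerical value of a result, from Left's point of view:
Right wins < draw < Left wins. -/
def Result.val : Result → ℕ
  | .Rwin => 0
  | .draw => 1
  | .Lwin => 2

/-- The partial order `≤_L` on outcomes, comparing both components simultaneously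
from Left's point of view. -/
def outLE (o o' : Outcome) : Prop := o.1.val ≤ o'.1.val ∧ o.2.val ≤ o'.2.val

def oL : Outcome := (.Lwin, .Lwin)
def oLminus : Outcome := (.Lwin, .draw)
def oN : Outcome := (.Lwin, .Rwin)
def oD : Outcome := (.draw, .draw)
def oRminus : Outcome := (.draw, .Rwin)
def oR : Outcome := (.Rwin, .Rwin)

/-- The updated game `G_u` after Left has picked `u`. -/
def subL (G : Game) (u : ℕ) : Game where
  V := G.V.erase u
  EL := G.EL.image fun e => e.erase u
  ER := G.ER.filter fun e => u ∉ e

/-- The updated game `G^u` after Right has picked `u`. -/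
def subR (G : Game) (u : ℕ) : Game where
  V := G.V.erase u
  EL := G.EL.filter fun e => u ∉ e
  ER := G.ER.image fun e => e.erase u

/-- The updated game `G_u^v` after Left has picked `u` and Right has picked `v`. -/
def updLR (G : Game) (u v : ℕ) : Game where
  V := (G.V.erase u).erase v
  EL := (G.EL.filter fun e => v ∉ e).image fun e => e.erase u
  ER := (G.ER.filter fun e => u ∉ e).image fun e => e.erase v

/-- The disjoint union of two games. -/
def gunion (G G' : Game) : Game where
  V := G.V ∪ G'.V
  EL := G.EL ∪ G'.EL
  ER := G.ER ∪ G'.ER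

/-!
Left plays on `G_u` by running a first-player strategy `σ` for `G` on an imagined board of `G`,
in which Right copies Right's real moves. A move of `σ` is copied to the real board when it is
legal there; otherwise it is `u` or a vertex Left already holds, and Left plays any free vertex
instead. So Right holds the same vertices on both boards, while Left holds on the real board every
imagined vertex except possibly `u`. A red edge filled on the real board avoids `u` and is filled on
the imagined one, and a blue edge `e` filled on the imagined board yields the filled edge `e \ {u}`
of `G_u`. When the real board is full, one more imagined move completes the imagined play.
-/

section Histories

variable {G : Game} {s p : Player} {σ : Strategy} {h : List ℕ} {x : ℕ}

lemma mem_picked {a : ℕ} :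
    a ∈ picked s p h ↔ ∃ i < h.length, mover s i = p ∧ h.getD i 0 = a := by
  simp [picked, and_assoc]

lemma picked_nil : picked s p [] = ∅ := by
  simp [picked]

lemma mem_of_mem_picked {a : ℕ} (ha : a ∈ picked s p h) : a ∈ h := by
  obtain ⟨i, hi, -, rfl⟩ := mem_picked.1 ha
  rw [List.getD_eq_getElem _ _ hi]
  exact List.getElem_mem hi

lemma mem_picked_or {a : ℕ} (ha : a ∈ h) : a ∈ picked s .L h ∨ a ∈ picked s .R h := by
  obtain ⟨i, hi, rfl⟩ := List.mem_iff_getElem.1 ha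
  have hget : h.getD i 0 = h[i] := List.getD_eq_getElem _ _ hi
  cases hm : mover s i
  · exact Or.inl (mem_picked.2 ⟨i, hi, hm, hget⟩)
  · exact Or.inr (mem_picked.2 ⟨i, hi, hm, hget⟩)

lemma picked_append_singleton :
    picked s p (h ++ [x]) =
      if mover s h.length = p then insert x (picked s p h) else picked s p h := by
  have himage : ((Finset.range h.length).filter fun i => mover s i = p).image
      (fun i => (h ++ [x]).getD i 0) = picked s p h :=
    Finset.image_congr fun i hi =>
      List.getD_append _ _ _ _ (Finset.mem_range.1 (Finset.mem_filter.1 hi).1)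
  have hlast : (h ++ [x]).getD h.length 0 = x := by simp
  simp only [picked, List.length_append, List.length_singleton, Finset.range_add_one,
    Finset.filter_insert]
  split_ifs <;> simp only [Finset.image_insert, himage, hlast] <;> rfl

namespace ValidHist

lemma nil : ValidHist G s [] :=
  ⟨List.nodup_nil, by simp, by simp⟩

lemma of_append_singleton (hv : ValidHist G s (h ++ [x])) : ValidHist G s h := by
  obtain ⟨hnd, hmem, hend⟩ := hv
  refine ⟨(List.nodup_append.1 hnd).1, fun y hy => hmem y (by simp [hy]), fun k hk => ?_⟩
  simpa [List.take_append_of_le_length hk.le] using hend k (by simp; omega)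

lemma not_ended_of_append_singleton (hv : ValidHist G s (h ++ [x])) : ¬ ended G s h := by
  simpa using hv.2.2 h.length (by simp)

lemma notMem_of_append_singleton (hv : ValidHist G s (h ++ [x])) : x ∉ h :=
  ((List.nodup_concat h x).1 (List.concat_eq_append ▸ hv.1)).1

lemma append_singleton (hv : ValidHist G s h) (hx : x ∈ G.V) (hxh : x ∉ h)
    (hne : ¬ ended G s h) : ValidHist G s (h ++ [x]) := by
  obtain ⟨hnd, hmem, hend⟩ := hv
  refine ⟨List.concat_eq_append ▸ (List.nodup_concat h x).2 ⟨hxh, hnd⟩,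
    by simpa [or_imp, forall_and] using ⟨hmem, hx⟩, fun k hk => ?_⟩
  rcases Nat.lt_succ_iff_lt_or_eq.1 (by simpa using hk) with hk | rfl
  · rw [List.take_append_of_le_length hk.le]
    exact hend k hk
  · simpa using hne

lemma length_le_card (hv : ValidHist G s h) : h.length ≤ G.V.card := by
  rw [← List.toFinset_card_of_nodup hv.1]
  exact Finset.card_le_card fun y hy => hv.2.1 y (List.mem_toFinset.1 hy)

lemma mem_of_length_eq_card (hv : ValidHist G s h) (hlen : h.length = G.V.card) {y : ℕ}
    (hy : y ∈ G.V) : y ∈ h := by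
  have hsub : h.toFinset ⊆ G.V := fun z hz => hv.2.1 z (List.mem_toFinset.1 hz)
  have hcard : G.V.card ≤ h.toFinset.card := by rw [List.toFinset_card_of_nodup hv.1, hlen]
  exact List.mem_toFinset.1 (Finset.eq_of_subset_of_card_le hsub hcard ▸ hy)

end ValidHist

namespace Follows

lemma nil : Follows s p σ [] :=
  fun k hk => absurd hk (by simp)

lemma of_append_singleton (hf : Follows s p σ (h ++ [x])) : Follows s p σ h := by
  intro k hk hm
  have := hf k (by simp; omega) hm
  rwa [List.take_append_of_le_length hk.le, List.getD_append _ _ _ _ hk] at this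

lemma eq_of_append_singleton (hf : Follows s p σ (h ++ [x])) (hm : mover s h.length = p) :
    x = σ h := by
  simpa using hf h.length (by simp) hm

lemma append_singleton (hf : Follows s p σ h) (hx : mover s h.length = p → x = σ h) :
    Follows s p σ (h ++ [x]) := by
  intro k hk hm
  rcases Nat.lt_succ_iff_lt_or_eq.1 (by simpa using hk) with hk | rfl
  · rw [List.take_append_of_le_length hk.le, List.getD_append _ _ _ _ hk]
    exact hf k hk hm
  · simpa using hx hm

end Follows

end Histories

section Strategies

variable {G : Game} {s p : Player} {σ : Strategy} {h : List ℕ} {x : ℕ}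

def freeVertex (V : Finset ℕ) (h : List ℕ) : ℕ :=
  if hne : (V \ h.toFinset).Nonempty then (V \ h.toFinset).min' hne else 0

lemma freeVertex_spec {V : Finset ℕ} (hlt : h.length < V.card) :
    freeVertex V h ∈ V ∧ freeVertex V h ∉ h := by
  have hne : (V \ h.toFinset).Nonempty := by
    rw [Finset.nonempty_iff_ne_empty, Ne, Finset.sdiff_eq_empty_iff_subset]
    intro hsub
    have := (Finset.card_le_card hsub).trans (List.toFinset_card_le h)
    omega
  have hmem := Finset.min'_mem _ hne
  simpa [freeVertex, hne] using hmem

def Strategy.legalize (V : Finset ℕ) (σ : Strategy) : Strategy := fun h =>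
  if σ h ∈ V ∧ σ h ∉ h then σ h else freeVertex V h

lemma legal_legalize : Legal G s p (Strategy.legalize G.V σ) := by
  intro h _ _ _ hlt _
  unfold Strategy.legalize
  split_ifs with hσ
  exacts [hσ, freeVertex_spec hlt]

lemma legalize_eq_or (V : Finset ℕ) (σ : Strategy) (h : List ℕ) :
    Strategy.legalize V σ h = σ h ∨ σ h ∉ V ∨ σ h ∈ h := by
  unfold Strategy.legalize
  split_ifs with hσ
  · exact Or.inl rfl
  · exact Or.inr (by tauto)

def replay (s p : Player) (σ : Strategy) (h : List ℕ) : ℕ → List ℕ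
  | 0 => []
  | n + 1 => replay s p σ h n ++ [if mover s n = p then σ (replay s p σ h n) else h.getD n 0]

@[simp]
lemma length_replay (n : ℕ) : (replay s p σ h n).length = n := by
  induction n with
  | zero => rfl
  | succ n ih => simp [replay, ih]

lemma follows_replay (n : ℕ) : Follows s p σ (replay s p σ h n) := by
  induction n with
  | zero => exact Follows.nil
  | succ n ih => exact ih.append_singleton fun hm => by rw [length_replay] at hm; simp [hm]

lemma replay_append_singleton_of_le {n : ℕ} (hn : n ≤ h.length) :
    replay s p σ (h ++ [x]) n = replay s p σ h n := by
  induction n with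
  | zero => rfl
  | succ n ih =>
    simp only [replay, ih (by omega), List.getD_append _ _ _ _ (by omega : n < h.length)]

lemma replay_append_singleton :
    replay s p σ (h ++ [x]) (h.length + 1) = replay s p σ h h.length ++
      [if mover s h.length = p then σ (replay s p σ h h.length) else x] := by
  simp [replay, replay_append_singleton_of_le le_rfl]

end Strategies

section UpdatedGame

variable {G : Game} {u : ℕ} {σ : Strategy} {K h : List ℕ} {x y : ℕ}

lemma fills_subL_EL {S T : Finset ℕ} (hS : fills G.EL S) (hST : S \ {u} ⊆ T) :
    fills (subL G u).EL T := by
  obtain ⟨e, he, heS⟩ := hS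
  refine ⟨e.erase u, Finset.mem_image_of_mem _ he, ?_⟩
  rw [Finset.erase_eq]
  exact (Finset.sdiff_subset_sdiff heS le_rfl).trans hST

lemma fills_subL_ER_iff_of_notMem {S : Finset ℕ} (hu : u ∉ S) :
    fills (subL G u).ER S ↔ fills G.ER S := by
  simp only [fills, subL, Finset.mem_filter]
  exact ⟨fun ⟨e, ⟨he, _⟩, heS⟩ => ⟨e, he, heS⟩,
    fun ⟨e, he, heS⟩ => ⟨e, ⟨he, fun hue => hu (heS hue)⟩, heS⟩⟩

lemma card_subL_V_add_one (hu : u ∈ G.V) : (subL G u).V.card + 1 = G.V.card :=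
  Finset.card_erase_add_one hu

lemma ValidHist.fills_subL_ER_iff (hv : ValidHist (subL G u) .L h) :
    fills (subL G u).ER (picked .L .R h) ↔ fills G.ER (picked .L .R h) :=
  fills_subL_ER_iff_of_notMem fun hu =>
    (Finset.mem_erase.1 (hv.2.1 u (mem_of_mem_picked hu))).1 rfl

def subLStrategy (G : Game) (u : ℕ) (σ : Strategy) : Strategy :=
  Strategy.legalize (subL G u).V fun h => σ (replay .L .L σ h h.length)

structure Tracks (G : Game) (u : ℕ) (K h : List ℕ) : Prop where
  valid : ValidHist G .L K
  length_eq : K.length = h.length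
  picked_R : picked .L .R K = picked .L .R h
  picked_L : picked .L .L K \ {u} ⊆ picked .L .L h

namespace Tracks

lemma nil : Tracks G u [] [] :=
  ⟨ValidHist.nil, rfl, rfl, by simp [picked_nil]⟩

lemma ended_subL (ht : Tracks G u K h) (hv : ValidHist (subL G u) .L h) (hK : ended G .L K) :
    ended (subL G u) .L h := by
  rcases hK with hL | hR
  · exact Or.inl (fills_subL_EL hL ht.picked_L)
  · rw [ht.picked_R] at hR
    exact Or.inr (hv.fills_subL_ER_iff.2 hR)

lemma mem_picked_L (ht : Tracks G u K h) (hy : y ∈ h) (hyK : y ∉ K) : y ∈ picked .L .L h :=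
  (mem_picked_or hy).resolve_right fun hR => hyK (mem_of_mem_picked (ht.picked_R ▸ hR))

lemma append_left (ht : Tracks G u K h) (hK : ¬ ended G .L K) (hm : mover .L h.length = .L)
    (hyV : y ∈ G.V) (hyK : y ∉ K) (hyx : y = x ∨ y = u ∨ y ∈ h) :
    Tracks G u (K ++ [y]) (h ++ [x]) := by
  have hmK : mover .L K.length = .L := ht.length_eq ▸ hm
  refine ⟨ht.valid.append_singleton hyV hyK hK, by simp [ht.length_eq], ?_, ?_⟩
  · simpa [picked_append_singleton, hm, hmK] using ht.picked_R
  · rw [picked_append_singleton, picked_append_singleton, if_pos hm, if_pos hmK]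
    intro z hz
    obtain ⟨hz, hzu⟩ := Finset.mem_sdiff.1 hz
    rcases Finset.mem_insert.1 hz with rfl | hz
    · rcases hyx with rfl | rfl | hyh
      · exact Finset.mem_insert_self _ _
      · simp at hzu
      · exact Finset.mem_insert_of_mem (ht.mem_picked_L hyh hyK)
    · exact Finset.mem_insert_of_mem (ht.picked_L (Finset.mem_sdiff.2 ⟨hz, hzu⟩))

lemma append_right (ht : Tracks G u K h) (hK : ¬ ended G .L K) (hm : mover .L h.length = .R)
    (hx : x ∈ (subL G u).V) (hxh : x ∉ h) : Tracks G u (K ++ [x]) (h ++ [x]) := by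
  have hmK : mover .L K.length = .R := ht.length_eq ▸ hm
  obtain ⟨hxu, hxV⟩ := Finset.mem_erase.1 hx
  have hxK : x ∉ K := fun hxK => (mem_picked_or hxK).elim
    (fun hL => hxh (mem_of_mem_picked (ht.picked_L (by simpa [hxu] using hL))))
    (fun hR => hxh (mem_of_mem_picked (ht.picked_R ▸ hR)))
  refine ⟨ht.valid.append_singleton hxV hxK hK, by simp [ht.length_eq], ?_, ?_⟩
  · simp [picked_append_singleton, hm, hmK, ht.picked_R]
  · simpa [picked_append_singleton, hm, hmK] using ht.picked_L

lemma exists_complete (hu : u ∈ G.V) (hσ : Legal G .L .L σ) (ht : Tracks G u K h)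
    (hKf : Follows .L .L σ K) (hK : ¬ ended G .L K) (hv : ValidHist (subL G u) .L h)
    (hfull : h.length = (subL G u).V.card) :
    ∃ K', ValidHist G .L K' ∧ Follows .L .L σ K' ∧ Complete G .L K' ∧
      picked .L .L K' \ {u} ⊆ picked .L .L h := by
  have hcard : K.length + 1 = G.V.card := by
    rw [ht.length_eq, hfull, card_subL_V_add_one hu]
  cases hm : mover .L K.length
  · obtain ⟨hyV, hyK⟩ := hσ K ht.valid hKf hK (by omega) hm
    refine ⟨K ++ [σ K], ht.valid.append_singleton hyV hyK hK,
      hKf.append_singleton fun _ => rfl, Or.inr (by simpa using hcard), ?_⟩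
    rw [picked_append_singleton, if_pos hm]
    intro z hz
    obtain ⟨hz, hzu⟩ := Finset.mem_sdiff.1 hz
    rcases Finset.mem_insert.1 hz with rfl | hz
    · have hzV : σ K ∈ (subL G u).V := Finset.mem_erase.2 ⟨by simpa using hzu, hyV⟩
      exact ht.mem_picked_L (hv.mem_of_length_eq_card hfull hzV) hyK
    · exact ht.picked_L (Finset.mem_sdiff.2 ⟨hz, hzu⟩)
  · obtain ⟨hyV, hyK⟩ := freeVertex_spec (V := G.V) (h := K) (by omega)
    refine ⟨K ++ [freeVertex G.V K], ht.valid.append_singleton hyV hyK hK,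
      hKf.append_singleton fun hm' => absurd (hm.symm.trans hm') nofun,
      Or.inr (by simpa using hcard), ?_⟩
    simpa [picked_append_singleton, hm] using ht.picked_L

end Tracks

lemma tracks_replay (hu : u ∈ G.V) (hσ : Legal G .L .L σ)
    (hv : ValidHist (subL G u) .L h) (hf : Follows .L .L (subLStrategy G u σ) h) :
    Tracks G u (replay .L .L σ h h.length) h := by
  induction h using List.reverseRecOn with
  | nil => exact Tracks.nil
  | append_singleton h x ih =>
    have ht := ih hv.of_append_singleton hf.of_append_singleton
    have hK : ¬ ended G .L (replay .L .L σ h h.length) := fun hK =>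
      hv.not_ended_of_append_singleton (ht.ended_subL hv.of_append_singleton hK)
    have hlen : h.length + 1 < G.V.card := by
      have := hv.length_le_card
      rw [List.length_append, List.length_singleton] at this
      have := card_subL_V_add_one hu
      omega
    rw [List.length_append, List.length_singleton, replay_append_singleton]
    cases hm : mover .L h.length
    · obtain ⟨hyV, hyK⟩ :=
        hσ _ ht.valid (follows_replay _) hK (by simp; omega) (by simpa using hm)
      refine ht.append_left hK hm hyV hyK ?_
      have hx : x = subLStrategy G u σ h := hf.eq_of_append_singleton hm
      rw [if_pos rfl]
      rcases legalize_eq_or (subL G u).V (fun h => σ (replay .L .L σ h h.length)) h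
        with hy | hy | hy
      · exact Or.inl (hx.trans hy).symm
      · exact Or.inr (Or.inl (by_contra fun hne => hy (Finset.mem_erase.2 ⟨hne, hyV⟩)))
      · exact Or.inr (Or.inr hy)
    · exact ht.append_right hK hm (hv.2.1 x (by simp)) hv.notMem_of_append_singleton

lemma subLStrategy_nonLosing (hu : u ∈ G.V) (hσ : Legal G .L .L σ)
    (hnl : ∀ K, ValidHist G .L K → Follows .L .L σ K → Complete G .L K →
      ¬ fills G.ER (picked .L .R K))
    (hv : ValidHist (subL G u) .L h) (hf : Follows .L .L (subLStrategy G u σ) h) :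
    ¬ fills (subL G u).ER (picked .L .R h) := by
  intro hR
  have ht := tracks_replay hu hσ hv hf
  rw [hv.fills_subL_ER_iff, ← ht.picked_R] at hR
  exact hnl _ ht.valid (follows_replay _) (Or.inl (Or.inr hR)) hR

lemma subLStrategy_wins (hu : u ∈ G.V) (hσ : Legal G .L .L σ)
    (hwin : ∀ K, ValidHist G .L K → Follows .L .L σ K → Complete G .L K →
      fills G.EL (picked .L .L K))
    (hv : ValidHist (subL G u) .L h) (hf : Follows .L .L (subLStrategy G u σ) h)
    (hc : Complete (subL G u) .L h) :
    fills (subL G u).EL (picked .L .L h) := by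
  have ht := tracks_replay hu hσ hv hf
  by_cases hend : ended (subL G u) .L h
  · rcases hend with hL | hR
    · exact hL
    · rw [hv.fills_subL_ER_iff, ← ht.picked_R] at hR
      exact fills_subL_EL (hwin _ ht.valid (follows_replay _) (Or.inl (Or.inr hR))) ht.picked_L
  · have hK : ¬ ended G .L (replay .L .L σ h h.length) := fun hK => hend (ht.ended_subL hv hK)
    obtain ⟨K', hv', hf', hc', hK'⟩ :=
      ht.exists_complete hu hσ (follows_replay _) hK hv (hc.resolve_left hend)
    exact fills_subL_EL (hwin K' hv' hf' hc') hK'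

end UpdatedGame

theorem updated_game_first_player_general (G : Game) (u : ℕ)
    (hu : u ∈ G.V) :
    (WinsAs G .L .L → WinsAs (subL G u) .L .L) ∧
    (NonLosingAs G .L .L → NonLosingAs (subL G u) .L .L) :=
  ⟨fun ⟨σ, hσ, hwin⟩ => ⟨subLStrategy G u σ, legal_legalize,
      fun _ hv hf hc => subLStrategy_wins hu hσ hwin hv hf hc⟩,
    fun ⟨σ, hσ, hnl⟩ => ⟨subLStrategy G u σ, legal_legalize,
      fun _ hv hf _ => subLStrategy_nonLosing hu hσ hnl hv hf⟩⟩

/-- If Left has a winning (resp. non-losing) strategy as first player on `G`,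
then Left has a winning (resp. non-losing) strategy as first player on `G_u`. -/
theorem updated_game_first_player (G : Game) (hG : WellFormed G) (u : ℕ)
    (hu : u ∈ G.V) (hu' : ({u} : Finset ℕ) ∉ G.EL) :
    (WinsAs G .L .L → WinsAs (subL G u) .L .L) ∧
    (NonLosingAs G .L .L → NonLosingAs (subL G u) .L .L) :=
  updated_game_first_player_general G u hu
end APG
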